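/- arXiv:2009.09797 — 5 statements merged into one kernel-verified Lean document; each statement's English description precedes it below -/
import Mathlib

section
/- A predicate P(t) holds for all t in the closed interval [0, T], where T > 0, if and only if: (1) P(0) holds; (2) for all τ ∈ (0, T], if P(τ') holds for all τ' ∈ [0, τ), then P(τ) holds; and (3) for all τ ∈ [0, T), if P(τ') holds for all τ' ∈ [0, τ], then there exists ε > 0 such that P(τ'') holds for all τ'' ∈ (τ, τ + ε). -/
/-!
The set of `x` with `[a, x) ⊆ s` is closed, being the intersection of the half-lines `(-∞, y]`
over the `y ≥ a` outside `s`. Hypothesis (2) upgrades `[a, x) ⊆ s` to `[a, x] ⊆ s`, and then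
hypothesis (3) shows that this closed set contains a right neighbourhood of `x`; the continuous
induction principle for closed sets finishes the proof.
-/

open Set Filter Topology

theorem isClosed_setOf_Ico_subset {α : Type*} [LinearOrder α] [TopologicalSpace α]
    [ClosedIicTopology α] (a : α) (s : Set α) : IsClosed {x | Ico a x ⊆ s} := by
  have : {x | Ico a x ⊆ s} = ⋂ y ∈ Ici a \ s, Iic y := by
    ext x
    simp only [mem_ofPred_eq, mem_iInter, mem_Iic, subset_def, mem_Ico, Set.mem_sdiff, mem_Ici]
    exact ⟨fun h y ⟨hay, hys⟩ => not_lt.1 fun hyx => hys (h y ⟨hay, hyx⟩),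
      fun h y ⟨hay, hyx⟩ => by_contra fun hys => (h y ⟨hay, hys⟩).not_gt hyx⟩
  rw [this]
  exact isClosed_biInter fun y _ => isClosed_Iic

theorem Ico_subset_of_Icc_subset_of_Ioo_subset {α : Type*} [LinearOrder α] {a x y z : α}
    {s : Set α} (hx : Icc a x ⊆ s) (hxy : Ioo x y ⊆ s) (hz : z ≤ y) : Ico a z ⊆ s := fun w hw =>
  (le_or_gt w x).elim (fun hwx => hx ⟨hw.1, hwx⟩) fun hxw => hxy ⟨hxw, hw.2.trans_le hz⟩

theorem Icc_subset_of_forall_Ico_subset {α : Type*} [ConditionallyCompleteLinearOrder α]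
    [TopologicalSpace α] [OrderTopology α] [DenselyOrdered α] {a b : α} {s : Set α}
    (ha : a ∈ s) (hlim : ∀ x ∈ Ioc a b, Ico a x ⊆ s → x ∈ s)
    (hstep : ∀ x ∈ Ico a b, Icc a x ⊆ s → ∃ y > x, Ioo x y ⊆ s) :
    Icc a b ⊆ s := by
  have hIcc : ∀ x ∈ Icc a b, Ico a x ⊆ s → Icc a x ⊆ s := fun x hx hxs => by
    rcases hx.1.eq_or_lt with rfl | hax
    · simpa using ha
    · rw [← Ico_insert_right hax.le]
      exact insert_subset (hlim x ⟨hax, hx.2⟩ hxs) hxs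
  have hS : Icc a b ⊆ {x | Ico a x ⊆ s} := by
    refine ((isClosed_setOf_Ico_subset a s).inter isClosed_Icc)
      |>.Icc_subset_of_forall_mem_nhdsGT_of_Icc_subset (by simp) fun x hx hxS => ?_
    have hxs := hIcc x (Ico_subset_Icc_self hx) (hxS (right_mem_Icc.2 hx.1))
    obtain ⟨y, hxy, hys⟩ := hstep x hx hxs
    exact mem_of_superset (Ioc_mem_nhdsGT hxy) fun z hz =>
      Ico_subset_of_Icc_subset_of_Ioo_subset hxs hys hz.2
  exact fun x hx => hIcc x hx (hS hx) (right_mem_Icc.2 hx.1)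

theorem continuity_induction (P : ℝ → Prop) (T : ℝ) (hT : 0 < T) :
    (∀ t ∈ Set.Icc (0:ℝ) T, P t) ↔
      (P 0 ∧
        (∀ τ ∈ Set.Ioc (0:ℝ) T, (∀ τ' ∈ Set.Ico (0:ℝ) τ, P τ') → P τ) ∧
        (∀ τ ∈ Set.Ico (0:ℝ) T, (∀ τ' ∈ Set.Icc (0:ℝ) τ, P τ') →
          ∃ ε > (0:ℝ), ∀ τ'' ∈ Set.Ioo τ (τ + ε), P τ'')) := by
  refine ⟨fun h => ⟨h 0 ⟨le_rfl, hT.le⟩, fun τ hτ _ => h τ (Ioc_subset_Icc_self hτ),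
    fun τ hτ _ => ⟨T - τ, sub_pos.2 hτ.2, fun τ'' hτ'' => h τ'' ?_⟩⟩, ?_⟩
  · exact ⟨hτ.1.trans hτ''.1.le, by linarith [hτ''.2]⟩
  rintro ⟨h0, hlim, hstep⟩
  refine Icc_subset_of_forall_Ico_subset (s := {t | P t}) h0 hlim fun τ hτ hP => ?_
  obtain ⟨ε, hε, hPε⟩ := hstep τ hτ hP
  exact ⟨τ + ε, lt_add_of_pos_right τ hε, hPε⟩
end

section
/- A set S ⊆ ℝⁿ is positively invariant under the flow φ of x' = f(x) if and only if S ⊆ In_f(S) and Sᶜ ⊆ In_{−f}(Sᶜ). -/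
def InSet {α : Type*} (φ : ℝ → α → α) (S : Set α) : Set α :=
  {x | ∃ ε > (0:ℝ), ∀ t ∈ Set.Ioo (0:ℝ) ε, φ t x ∈ S}

/-- `In` with respect to the time-reversed flow. -/
def InSetRev {α : Type*} (φ : ℝ → α → α) (S : Set α) : Set α :=
  {x | ∃ ε > (0:ℝ), ∀ t ∈ Set.Ioo (0:ℝ) ε, φ (-t) x ∈ S}

theorem pos_invariant_iff_real_induction {n : ℕ}
    (φ : ℝ → (Fin n → ℝ) → (Fin n → ℝ))
    (hφ0 : ∀ x, φ 0 x = x)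
    (hgrp : ∀ t s x, φ t (φ s x) = φ (t + s) x)
    (hcont : ∀ x, Continuous fun t => φ t x)
    (S : Set (Fin n → ℝ)) :
    (∀ x ∈ S, ∀ t : ℝ, 0 ≤ t → φ t x ∈ S) ↔
      (S ⊆ InSet φ S ∧ Sᶜ ⊆ InSetRev φ Sᶜ) := by
  constructor
  · intro h
    refine ⟨fun x hx => ⟨1, one_pos, fun t ht => h x hx t ht.1.le⟩,
      fun x hx => ⟨1, one_pos, fun t ht hmem => ?_⟩⟩
    have := h _ hmem t ht.1.le
    rw [hgrp, add_neg_cancel, hφ0] at this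
    exact hx this
  · rintro ⟨h1, h2⟩ x hx t ht
    by_contra hns
    set A : Set ℝ := {s | s ∈ Set.Icc 0 t ∧ φ s x ∉ S} with hA
    have htA : t ∈ A := ⟨⟨ht, le_refl t⟩, hns⟩
    have hAne : A.Nonempty := ⟨t, htA⟩
    have hAbdd : BddBelow A := ⟨0, fun s hs => hs.1.1⟩
    set τ := sInf A with hτ
    have hτ0 : 0 ≤ τ := le_csInf hAne fun s hs => hs.1.1
    have hτt : τ ≤ t := csInf_le hAbdd htA
    by_cases hc : φ τ x ∈ S
    · obtain ⟨ε, hε, hεS⟩ := h1 hc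
      have hlb : τ + ε ≤ τ := by
        refine le_csInf hAne fun a ha => ?_
        have haτ : τ ≤ a := csInf_le hAbdd ha
        by_contra hlt
        push_neg at hlt
        have haneτ : a ≠ τ := fun he => ha.2 (he ▸ hc)
        have h1' : 0 < a - τ := sub_pos.mpr (lt_of_le_of_ne haτ (Ne.symm haneτ))
        have h2' : a - τ < ε := by linarith
        have := hεS (a - τ) ⟨h1', h2'⟩
        rw [hgrp, sub_add_cancel] at this
        exact ha.2 this
      linarith
    · have hτpos : 0 < τ := by
        rcases lt_or_eq_of_le hτ0 with h' | h'
        · exact h'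
        · exact absurd (by rw [← h', hφ0]; exact hx) hc
      obtain ⟨ε, hε, hεS⟩ := h2 hc
      set u := min (ε / 2) (τ / 2) with hu
      have hu0 : 0 < u := lt_min (by linarith) (by linarith)
      have huε : u < ε := lt_of_le_of_lt (min_le_left _ _) (by linarith)
      have huτ : u < τ := lt_of_le_of_lt (min_le_right _ _) (by linarith)
      have hmem := hεS u ⟨hu0, huε⟩
      rw [hgrp] at hmem
      have hinA : (-u + τ) ∈ A := ⟨⟨by linarith, by linarith⟩, hmem⟩
      have := csInf_le hAbdd hinA
      rw [← hτ] at this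
      linarith
end

section
/- A set S ⊆ ℝⁿ is positively invariant under the flow φ if and only if both Exit_f(S) = ∅ and Exit_{−f}(Sᶜ) = ∅. -/
/-!
Fix `x ∈ S` and read `φ t x ∈ S` as a predicate of `t ≥ 0`. An empty exit set makes it persist
for a short time past any instant at which it holds; an empty reverse exit set of `Sᶜ` makes it
fail on a short interval before any instant `τ > 0` at which it fails. At the infimum of the
times at which it fails, either case gives a contradiction.
-/

open Set

def ExitSet {α : Type*} (φ : ℝ → α → α) (S : Set α) : Set α :=
  {x | x ∈ S ∧ ∀ t > (0:ℝ), ∃ s ∈ Set.Ioo (0:ℝ) t, φ s x ∉ S}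

/-- Exit set with respect to the time-reversed flow. -/
def ExitSetRev {α : Type*} (φ : ℝ → α → α) (S : Set α) : Set α :=
  {x | x ∈ S ∧ ∀ t > (0:ℝ), ∃ s ∈ Set.Ioo (0:ℝ) t, φ (-s) x ∉ S}

theorem forall_nonneg_of_persists_right_of_fails_left {P : ℝ → Prop} (h0 : P 0)
    (hright : ∀ τ, 0 ≤ τ → P τ → ∃ ε > 0, ∀ s ∈ Ioo τ (τ + ε), P s)
    (hleft : ∀ τ, 0 < τ → ¬P τ → ∃ ε > 0, ∀ s ∈ Ioo (τ - ε) τ, ¬P s) :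
    ∀ t, 0 ≤ t → P t := by
  by_contra! ⟨t, ht, hPt⟩
  set T := {s | 0 ≤ s ∧ ¬P s}
  have hT : T.Nonempty := ⟨t, ht, hPt⟩
  have hbdd : BddBelow T := ⟨0, fun s hs => hs.1⟩
  set τ := sInf T
  have hτ0 : 0 ≤ τ := le_csInf hT fun s hs => hs.1
  by_cases hPτ : P τ
  · obtain ⟨ε, hε, hP⟩ := hright τ hτ0 hPτ
    obtain ⟨s, ⟨hs0, hPs⟩, hsε⟩ := exists_lt_of_csInf_lt hT (lt_add_of_pos_right τ hε)
    have hτs : τ < s := (csInf_le hbdd ⟨hs0, hPs⟩).lt_of_ne (by rintro rfl; exact hPs hPτ)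
    exact hPs (hP s ⟨hτs, hsε⟩)
  · have hτpos : 0 < τ := hτ0.lt_of_ne fun h => hPτ (h ▸ h0)
    obtain ⟨ε, hε, hnP⟩ := hleft τ hτpos hPτ
    obtain ⟨s, hs, hsτ⟩ := exists_between (max_lt (sub_lt_self τ hε) hτpos)
    rw [max_lt_iff] at hs
    exact notMem_of_lt_csInf hsτ hbdd ⟨hs.2.le, hnP s ⟨hs.1, hsτ⟩⟩

section Flow

variable {α : Type*} {φ : ℝ → α → α} {S : Set α}

theorem exitSet_eq_empty_iff :
    ExitSet φ S = ∅ ↔ ∀ x ∈ S, ∃ ε > 0, ∀ s ∈ Ioo 0 ε, φ s x ∈ S := by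
  simp [eq_empty_iff_forall_notMem, ExitSet]

theorem exitSetRev_compl_eq_empty_iff :
    ExitSetRev φ Sᶜ = ∅ ↔ ∀ x ∉ S, ∃ ε > 0, ∀ s ∈ Ioo 0 ε, φ (-s) x ∉ S := by
  simp [eq_empty_iff_forall_notMem, ExitSetRev]

theorem exitSet_eq_empty_of_posInvariant (h : ∀ x ∈ S, ∀ t : ℝ, 0 ≤ t → φ t x ∈ S) :
    ExitSet φ S = ∅ :=
  exitSet_eq_empty_iff.2 fun x hx => ⟨1, one_pos, fun s hs => h x hx s hs.1.le⟩

theorem exitSetRev_compl_eq_empty_of_posInvariant (hφ0 : ∀ x, φ 0 x = x)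
    (hgrp : ∀ t s x, φ (t + s) x = φ t (φ s x)) (h : ∀ x ∈ S, ∀ t : ℝ, 0 ≤ t → φ t x ∈ S) :
    ExitSetRev φ Sᶜ = ∅ :=
  exitSetRev_compl_eq_empty_iff.2 fun x hx =>
    ⟨1, one_pos, fun s hs hsx => hx <| by
      simpa only [← hgrp, add_neg_cancel, hφ0] using h _ hsx s hs.1.le⟩

theorem posInvariant_of_exitSets_eq_empty (hφ0 : ∀ x, φ 0 x = x)
    (hgrp : ∀ t s x, φ (t + s) x = φ t (φ s x))
    (hE : ExitSet φ S = ∅) (hR : ExitSetRev φ Sᶜ = ∅) :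
    ∀ x ∈ S, ∀ t : ℝ, 0 ≤ t → φ t x ∈ S := by
  intro x hx
  refine forall_nonneg_of_persists_right_of_fails_left (P := fun t => φ t x ∈ S)
    (by rwa [hφ0]) (fun τ _ hτ => ?_) (fun τ _ hτ => ?_)
  · obtain ⟨ε, hε, hstay⟩ := exitSet_eq_empty_iff.1 hE _ hτ
    refine ⟨ε, hε, fun s hs => ?_⟩
    simpa only [← hgrp, sub_add_cancel] using
      hstay (s - τ) ⟨sub_pos.2 hs.1, by linarith [hs.2]⟩
  · obtain ⟨ε, hε, hout⟩ := exitSetRev_compl_eq_empty_iff.1 hR _ hτ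
    refine ⟨ε, hε, fun s hs => ?_⟩
    simpa only [← hgrp, neg_sub, sub_add_cancel] using
      hout (τ - s) ⟨sub_pos.2 hs.2, by linarith [hs.1]⟩

end Flow

theorem pos_invariant_iff_exit_sets_empty_general {n : ℕ}
    (φ : ℝ → (Fin n → ℝ) → (Fin n → ℝ))
    (hφ0 : ∀ x, φ 0 x = x)
    (hgrp : ∀ t s x, φ (t + s) x = φ t (φ s x))
    (S : Set (Fin n → ℝ)) :
    (∀ x ∈ S, ∀ t : ℝ, 0 ≤ t → φ t x ∈ S) ↔
      (ExitSet φ S = ∅ ∧ ExitSetRev φ Sᶜ = ∅) :=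
  ⟨fun h => ⟨exitSet_eq_empty_of_posInvariant h,
      exitSetRev_compl_eq_empty_of_posInvariant hφ0 hgrp h⟩,
    fun ⟨hE, hR⟩ => posInvariant_of_exitSets_eq_empty hφ0 hgrp hE hR⟩

theorem pos_invariant_iff_exit_sets_empty {n : ℕ}
    (φ : ℝ → (Fin n → ℝ) → (Fin n → ℝ))
    (hφ0 : ∀ x, φ 0 x = x)
    (hgrp : ∀ t s x, φ (t + s) x = φ t (φ s x))
    (hcont : ∀ x, Continuous fun t => φ t x)
    (S : Set (Fin n → ℝ)) :
    (∀ x ∈ S, ∀ t : ℝ, 0 ≤ t → φ t x ∈ S) ↔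
      (ExitSet φ S = ∅ ∧ ExitSetRev φ Sᶜ = ∅) :=
  pos_invariant_iff_exit_sets_empty_general φ hφ0 hgrp S
end

section
/- For the flow φ(t, x) = x + t on ℝ, let S₁ = {0} ∪ { x | x > 0 ∧ sin(1/x) = 0 } and S₂ = {0} ∪ { x | x > 0 ∧ sin(1/x) ≠ 0 }. Then 0 ∈ Exit_f(S₁), 0 ∈ Exit_f(S₂), 0 ∉ In_f(S₁), 0 ∉ In_f(S₂), yet 0 ∉ Exit_f(S₁ ∪ S₂) (since S₁ ∪ S₂ = { x | x ≥ 0 } is positively invariant). Hence the inclusion Exit_f(S₁ ∪ S₂) ⊆ (Exit_f(S₁) ∩ In_f(S₂)ᶜ) ∪ (In_f(S₁)ᶜ ∩ Exit_f(S₂)) is strict in general. -/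
lemma sin_zero_dense : ∀ t > (0:ℝ), ∃ s, 0 < s ∧ s < t ∧ Real.sin s⁻¹ = 0 := by
  intro t ht
  have hπ := Real.pi_pos
  obtain ⟨n, hn⟩ := exists_nat_gt ((t * Real.pi)⁻¹)
  have hinv : (0:ℝ) < (t * Real.pi)⁻¹ := by positivity
  have hn0 : (0:ℝ) < n := lt_trans hinv hn
  refine ⟨((n : ℝ) * Real.pi)⁻¹, by positivity, ?_, ?_⟩
  · rw [inv_lt_comm₀ (by positivity) ht]
    calc t⁻¹ = (t * Real.pi)⁻¹ * Real.pi := by field_simp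
    _ < (n : ℝ) * Real.pi := by nlinarith
  · rw [inv_inv]
    exact Real.sin_nat_mul_pi n

lemma sin_ne_zero_dense : ∀ t > (0:ℝ), ∃ s, 0 < s ∧ s < t ∧ Real.sin s⁻¹ ≠ 0 := by
  intro t ht
  have hπ := Real.pi_pos
  obtain ⟨n, hn⟩ := exists_nat_gt (t⁻¹)
  refine ⟨(Real.pi / 2 + (n : ℝ) * (2 * Real.pi))⁻¹, by positivity, ?_, ?_⟩
  · rw [inv_lt_comm₀ (by positivity) ht]
    nlinarith [n.cast_nonneg (α := ℝ), Real.pi_gt_three]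
  · rw [inv_inv, Real.sin_add_nat_mul_two_pi, Real.sin_pi_div_two]
    norm_num

theorem exitSet_union_strict_counterexample :
    let φ : ℝ → ℝ → ℝ := fun t x => x + t
    let S₁ : Set ℝ := {0} ∪ {x | x > 0 ∧ Real.sin x⁻¹ = 0}
    let S₂ : Set ℝ := {0} ∪ {x | x > 0 ∧ Real.sin x⁻¹ ≠ 0}
    (0:ℝ) ∈ ExitSet φ S₁ ∧ (0:ℝ) ∈ ExitSet φ S₂ ∧
    (0:ℝ) ∉ InSet φ S₁ ∧ (0:ℝ) ∉ InSet φ S₂ ∧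
    (0:ℝ) ∉ ExitSet φ (S₁ ∪ S₂) ∧
    ExitSet φ (S₁ ∪ S₂) ⊂
      (ExitSet φ S₁ ∩ (InSet φ S₂)ᶜ) ∪ ((InSet φ S₁)ᶜ ∩ ExitSet φ S₂) := by
  intro φ S₁ S₂
  have hmem1 : ∀ x : ℝ, x ∈ S₁ ↔ x = 0 ∨ (x > 0 ∧ Real.sin x⁻¹ = 0) := fun x => Iff.rfl
  have hmem2 : ∀ x : ℝ, x ∈ S₂ ↔ x = 0 ∨ (x > 0 ∧ Real.sin x⁻¹ ≠ 0) := fun x => Iff.rfl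
  have h01 : (0:ℝ) ∈ S₁ := Or.inl rfl
  have h02 : (0:ℝ) ∈ S₂ := Or.inl rfl
  -- exit from S₁: nearby points where sin ≠ 0
  have hE1 : (0:ℝ) ∈ ExitSet φ S₁ := by
    refine ⟨h01, fun t ht => ?_⟩
    obtain ⟨s, hs0, hst, hsin⟩ := sin_ne_zero_dense t ht
    refine ⟨s, ⟨hs0, hst⟩, ?_⟩
    simp only [φ, zero_add]
    rw [hmem1]
    rintro (rfl | ⟨_, h⟩)
    · exact lt_irrefl 0 hs0
    · exact hsin h
  have hE2 : (0:ℝ) ∈ ExitSet φ S₂ := by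
    refine ⟨h02, fun t ht => ?_⟩
    obtain ⟨s, hs0, hst, hsin⟩ := sin_zero_dense t ht
    refine ⟨s, ⟨hs0, hst⟩, ?_⟩
    simp only [φ, zero_add]
    rw [hmem2]
    rintro (rfl | ⟨_, h⟩)
    · exact lt_irrefl 0 hs0
    · exact h hsin
  have hI1 : (0:ℝ) ∉ InSet φ S₁ := by
    rintro ⟨ε, hε, h⟩
    obtain ⟨s, hs0, hst, hsin⟩ := sin_ne_zero_dense ε hε
    have := h s ⟨hs0, hst⟩
    simp only [φ, zero_add] at this
    rw [hmem1] at this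
    rcases this with rfl | ⟨_, h'⟩
    · exact lt_irrefl 0 hs0
    · exact hsin h'
  have hI2 : (0:ℝ) ∉ InSet φ S₂ := by
    rintro ⟨ε, hε, h⟩
    obtain ⟨s, hs0, hst, hsin⟩ := sin_zero_dense ε hε
    have := h s ⟨hs0, hst⟩
    simp only [φ, zero_add] at this
    rw [hmem2] at this
    rcases this with rfl | ⟨_, h'⟩
    · exact lt_irrefl 0 hs0
    · exact h' hsin
  have hEU : (0:ℝ) ∉ ExitSet φ (S₁ ∪ S₂) := by
    rintro ⟨-, h⟩
    obtain ⟨s, ⟨hs0, _⟩, hns⟩ := h 1 one_pos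
    apply hns
    simp only [φ, zero_add]
    by_cases hsin : Real.sin s⁻¹ = 0
    · exact Or.inl (Or.inr ⟨hs0, hsin⟩)
    · exact Or.inr (Or.inr ⟨hs0, hsin⟩)
  refine ⟨hE1, hE2, hI1, hI2, hEU, ?_, ?_⟩
  · -- subset
    rintro x ⟨hxS, hexit⟩
    rcases hxS with hx1 | hx2
    · refine Or.inl ⟨⟨hx1, fun t ht => ?_⟩, ?_⟩
      · obtain ⟨s, hs, hns⟩ := hexit t ht
        exact ⟨s, hs, fun h => hns (Or.inl h)⟩
      · rintro ⟨ε, hε, h⟩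
        obtain ⟨s, hs, hns⟩ := hexit ε hε
        exact hns (Or.inr (h s hs))
    · refine Or.inr ⟨?_, ⟨hx2, fun t ht => ?_⟩⟩
      · rintro ⟨ε, hε, h⟩
        obtain ⟨s, hs, hns⟩ := hexit ε hε
        exact hns (Or.inl (h s hs))
      · obtain ⟨s, hs, hns⟩ := hexit t ht
        exact ⟨s, hs, fun h => hns (Or.inr h)⟩
  · -- strictness witness: 0
    intro hsub
    exact hEU (hsub (Or.inl ⟨hE1, hI2⟩))
end

section
/- Let p be a polynomial, f a polynomial vector field, rem₀ = p, and let rem_{i+1} be the remainder of the polynomial reduction (multivariate division) of the Lie derivative (rem_i)' by {rem₀, rem₁, …, rem_i}. Then for all i ≥ 1 there exist polynomials α_{ij} such that rem_i = p^(i) − Σ_{j=0}^{i−1} α_{ij} · p^(j). In particular, rem_i ≡ p^(i) modulo the ideal ⟨p, p', …, p^(i−1)⟩. -/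
/-! The Lie derivative along `f` is a derivation `D`, and `D` maps the ideal
`⟨p, D p, …, D^[i-1] p⟩` into `⟨p, D p, …, D^[i] p⟩` by the Leibniz rule. By strong induction
`rem i ≡ D^[i] p` modulo `⟨p, …, D^[i-1] p⟩`: applying `D` to `rem i - D^[i] p` lands in the next
ideal, and every `rem j` with `j ≤ i` lies in it as well, so the subtracted combination does too. -/

noncomputable def lieDeriv {n : ℕ} (f : Fin n → MvPolynomial (Fin n) ℝ)
    (p : MvPolynomial (Fin n) ℝ) : MvPolynomial (Fin n) ℝ :=
  ∑ i : Fin n, MvPolynomial.pderiv i p * f i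

theorem Ideal.mem_span_image_Iio_iff_exists_eq_sum {A : Type*} [CommSemiring A] (g : ℕ → A)
    (i : ℕ) (x : A) :
    x ∈ Ideal.span (g '' Set.Iio i) ↔ ∃ α : ℕ → A, x = ∑ j ∈ Finset.range i, α j * g j := by
  rw [← Finset.coe_range, Ideal.span, Submodule.mem_span_image_finset_iff_exists_fun']
  simp only [smul_eq_mul, eq_comm]

namespace Derivation

variable {R A : Type*} [CommSemiring R] [CommRing A] [Algebra R A]

def iterateIdeal (D : Derivation R A A) (p : A) (i : ℕ) : Ideal A :=
  Ideal.span ((fun j => (⇑D)^[j] p) '' Set.Iio i)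

theorem iterateIdeal_mono (D : Derivation R A A) (p : A) : Monotone (D.iterateIdeal p) :=
  fun _ _ hij => Ideal.span_mono (Set.image_mono (Set.Iio_subset_Iio hij))

theorem iterate_mem_iterateIdeal (D : Derivation R A A) (p : A) {i j : ℕ} (hj : j < i) :
    (⇑D)^[j] p ∈ D.iterateIdeal p i :=
  Ideal.subset_span ⟨j, hj, rfl⟩

theorem apply_mem_iterateIdeal_succ (D : Derivation R A A) (p : A) {i : ℕ} {x : A}
    (hx : x ∈ D.iterateIdeal p i) : D x ∈ D.iterateIdeal p (i + 1) := by
  induction hx using Submodule.span_induction with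
  | mem y hy =>
    obtain ⟨j, hj, rfl⟩ := hy
    rw [← Function.iterate_succ_apply' D]
    exact D.iterate_mem_iterateIdeal p (Nat.succ_lt_succ hj)
  | zero => simp
  | add y z _ _ hy hz => simpa using add_mem hy hz
  | smul a y hy hDy =>
    rw [smul_eq_mul, leibniz, smul_eq_mul, smul_eq_mul]
    exact add_mem (Ideal.mul_mem_left _ _ hDy)
      (Ideal.mul_mem_right _ _ (D.iterateIdeal_mono p i.le_succ hy))

theorem sub_iterate_mem_iterateIdeal_of_reduction (D : Derivation R A A) (p : A) (rem : ℕ → A)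
    (hrem0 : rem 0 = p)
    (hrem : ∀ i, ∃ β : ℕ → A, rem (i + 1) = D (rem i) - ∑ j ∈ Finset.range (i + 1), β j * rem j)
    (i : ℕ) : rem i - (⇑D)^[i] p ∈ D.iterateIdeal p i := by
  induction i using Nat.strong_induction_on with
  | _ i ih =>
  match i with
  | 0 => simp [hrem0]
  | i + 1 =>
    have hrem_mem : ∀ j < i + 1, rem j ∈ D.iterateIdeal p (i + 1) := fun j hj => by
      rw [← sub_add_cancel (rem j) ((⇑D)^[j] p)]
      exact add_mem (D.iterateIdeal_mono p hj.le (ih j hj)) (D.iterate_mem_iterateIdeal p hj)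
    obtain ⟨β, hβ⟩ := hrem i
    have hsplit : rem (i + 1) - (⇑D)^[i + 1] p =
        D (rem i - (⇑D)^[i] p) - ∑ j ∈ Finset.range (i + 1), β j * rem j := by
      rw [hβ, map_sub, Function.iterate_succ_apply']
      ring
    rw [hsplit]
    exact sub_mem (D.apply_mem_iterateIdeal_succ p (ih i i.lt_succ_self))
      (Ideal.sum_mem _ fun j hj => Ideal.mul_mem_left _ _ (hrem_mem j (Finset.mem_range.1 hj)))

end Derivation

namespace MvPolynomial

noncomputable def lieDerivation {σ R : Type*} [Fintype σ] [CommSemiring R]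
    (f : σ → MvPolynomial σ R) : Derivation R (MvPolynomial σ R) (MvPolynomial σ R) :=
  ∑ i, f i • pderiv i

theorem coe_lieDerivation {n : ℕ} (f : Fin n → MvPolynomial (Fin n) ℝ) :
    ⇑(lieDerivation f) = lieDeriv f := by
  funext p
  rw [lieDerivation, ← Derivation.coeFnAddMonoidHom_apply, map_sum, Finset.sum_apply]
  simp [lieDeriv, mul_comm]

end MvPolynomial

open MvPolynomial in
theorem rem_eq_lie_sub_combination {n : ℕ}
    (f : Fin n → MvPolynomial (Fin n) ℝ) (p : MvPolynomial (Fin n) ℝ)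
    (rem : ℕ → MvPolynomial (Fin n) ℝ)
    (hrem0 : rem 0 = p)
    (hrem : ∀ i : ℕ, ∃ β : ℕ → MvPolynomial (Fin n) ℝ,
      rem (i + 1) = lieDeriv f (rem i) - ∑ j ∈ Finset.range (i + 1), β j * rem j) :
    ∀ i : ℕ, 1 ≤ i →
      (∃ α : ℕ → MvPolynomial (Fin n) ℝ,
        rem i = (lieDeriv f)^[i] p - ∑ j ∈ Finset.range i, α j * (lieDeriv f)^[j] p) ∧
      rem i - (lieDeriv f)^[i] p ∈
        Ideal.span ((fun j => (lieDeriv f)^[j] p) '' {j | j < i}) := by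
  intro i _
  have hmem : rem i - (lieDeriv f)^[i] p ∈
      Ideal.span ((fun j => (lieDeriv f)^[j] p) '' Set.Iio i) := by
    simpa only [Derivation.iterateIdeal, coe_lieDerivation] using
      (lieDerivation f).sub_iterate_mem_iterateIdeal_of_reduction p rem hrem0
        (by simpa only [coe_lieDerivation] using hrem) i
  refine ⟨?_, hmem⟩
  obtain ⟨α, hα⟩ := (Ideal.mem_span_image_Iio_iff_exists_eq_sum _ i _).1 hmem
  refine ⟨-α, ?_⟩
  simp only [Pi.neg_apply, neg_mul, Finset.sum_neg_distrib, sub_neg_eq_add, ← hα]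
  ring
end
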